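/- arXiv:1512.02596 — 2 statements merged into one kernel-verified Lean document; each statement's English description precedes it below -/
import Mathlib

section
/- The formal power series T(x) = ∑_{n≥0} t(n) xⁿ satisfies the cubic equation (6x⁵ − 3x⁴ + 2x³ + 3x² − 1)T³ + (x⁵ − x⁴ + x³ + 2x² − 1)T² + (x³ − x² + 1)T + 1 = 0. -/
/-!
`Γ = ℤ/3 ∗ ℤ/2` acts faithfully on its reduced words, kept as stacks of alternating syllables
`U`, `U²`, `S`, so a word is trivial iff reading it letter by letter into the empty stack ends
with the empty stack. Cutting a word at the first moment the top syllable `x` is consumed splits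
the words emptying a stack `x :: l` uniquely into a word first emptying `[x]` followed by a word
emptying `l`. With `A`, `B`, `C` the generating functions of the words first emptying `[U]`,
`[S]`, `[U²]`, conditioning on the first letter gives `B = x(AB + 1)`, `A = x(C + BA)`,
`C = x(1 + BC)` and `T = 1 + x(A + B)T`. For `y = 1 - xB` these become a cubic equation for `y`
and `T(y³ - x³) = y²`, and the resultant in `y` of the two is `x⁶` times the claimed cubic in `T`.
-/

/-- Relations of the modular group presentation ⟨U, S | U³, S²⟩:
`true` plays the role of `U`, `false` the role of `S`. -/
def modularRels : Set (FreeGroup Bool) :=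
  {FreeGroup.of true ^ 3, FreeGroup.of false ^ 2}

/-- Γ = PSL₂(ℤ) presented as ⟨U, S | U³, S²⟩. -/
abbrev ModularGroup' := PresentedGroup modularRels

/-- The letter map: `true ↦ U`, `false ↦ S`. -/
def letterΓ : Bool → ModularGroup' := fun b => PresentedGroup.of b

/-- The product in Γ of a word in the alphabet {U, S}. -/
def wordProd (l : List Bool) : ModularGroup' := (l.map letterΓ).prod

/-- `t n` is the number of words of length `n` in {U,S} equal to the identity in Γ. -/
noncomputable def t (n : ℕ) : ℕ :=
  Nat.card {w : Fin n → Bool // wordProd (List.ofFn w) = 1}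

/-- The generating function T(x) = ∑ t(n) xⁿ. -/
noncomputable def Tser : PowerSeries ℚ := PowerSeries.mk fun n => (t n : ℚ)

open PowerSeries
open Finset.HasAntidiagonal (antidiagonal mem_antidiagonal)

section LengthGenFun

variable {α : Type*} (R : Type*) [CommSemiring R]

noncomputable def lengthCount (L : Set (List α)) (n : ℕ) : ℕ :=
  Nat.card {w : List α // w ∈ L ∧ w.length = n}

instance [Finite α] (L : Set (List α)) (n : ℕ) : Finite {w : List α // w ∈ L ∧ w.length = n} :=
  Set.Finite.to_subtype ((List.finite_length_eq α n).subset fun _ hw => hw.2)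

noncomputable def lengthGenFun (L : Set (List α)) : R⟦X⟧ :=
  mk fun n => (lengthCount L n : R)

@[simp]
lemma coeff_lengthGenFun (L : Set (List α)) (n : ℕ) :
    coeff n (lengthGenFun R L) = lengthCount L n :=
  coeff_mk _ _

lemma lengthCount_eq_card_fin (L : Set (List α)) (n : ℕ) :
    lengthCount L n = Nat.card {w : Fin n → α // List.ofFn w ∈ L} := by
  refine Nat.card_congr (Equiv.ofBijective (fun w => ⟨List.ofFn w.1, w.2, List.length_ofFn⟩)
    ⟨fun v w h => Subtype.ext (List.ofFn_injective (congrArg Subtype.val h)), ?_⟩).symm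
  rintro ⟨w, hw, rfl⟩
  exact ⟨⟨w.get, by rwa [List.ofFn_get]⟩, Subtype.ext (List.ofFn_get w)⟩

open Classical in
lemma lengthCount_zero (L : Set (List α)) :
    lengthCount L 0 = if [] ∈ L then 1 else 0 := by
  simp only [lengthCount, List.length_eq_zero_iff]
  split_ifs with h
  · exact Nat.card_eq_one_iff_unique.2
      ⟨⟨fun v w => Subtype.ext (v.2.2.trans w.2.2.symm)⟩, ⟨⟨[], h, rfl⟩⟩⟩
  · exact Nat.card_eq_zero.2 (Or.inl ⟨fun w => h (w.2.2 ▸ w.2.1)⟩)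

lemma lengthCount_succ [Fintype α] (L : Set (List α)) (n : ℕ) :
    lengthCount L (n + 1) = ∑ a, lengthCount {w | a :: w ∈ L} n := by
  simp only [lengthCount, ← Nat.card_sigma]
  refine Nat.card_congr
    { toFun := fun w => ⟨w.1.head (List.ne_nil_of_length_eq_add_one w.2.2), w.1.tail,
        by simpa using w.2.1, by simp [w.2.2]⟩
      invFun := fun w => ⟨w.1 :: w.2.1, w.2.2.1, by simp [w.2.2.2]⟩
      left_inv := fun w => Subtype.ext (List.cons_head_tail _)
      right_inv := fun w => rfl }

open Classical in
theorem lengthGenFun_eq_add_X_mul_sum [Fintype α] (L : Set (List α)) :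
    lengthGenFun R L = (if [] ∈ L then 1 else 0) + X * ∑ a, lengthGenFun R {w | a :: w ∈ L} := by
  ext (_ | n) <;> by_cases h : [] ∈ L <;> simp [lengthCount_zero, lengthCount_succ, h]

lemma lengthCount_image2_append [Finite α] {L M : Set (List α)}
    (h : Set.InjOn (fun p => p.1 ++ p.2) (L ×ˢ M)) (n : ℕ) :
    lengthCount (Set.image2 (· ++ ·) L M) n =
      ∑ p ∈ antidiagonal n, lengthCount L p.1 * lengthCount M p.2 := by
  simp only [lengthCount, ← Nat.card_prod]
  rw [← Finset.sum_coe_sort, ← Nat.card_sigma]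
  refine Nat.card_congr (Equiv.ofBijective (fun x => ⟨x.2.1.1 ++ x.2.2.1,
    Set.mem_image2_of_mem x.2.1.2.1 x.2.2.2.1,
    by simpa [x.2.1.2.2, x.2.2.2.2] using mem_antidiagonal.1 x.1.2⟩) ⟨?_, ?_⟩).symm
  · rintro ⟨⟨p, hp⟩, ⟨u, hu, hup⟩, ⟨v, hv, hvp⟩⟩ ⟨⟨p', hp'⟩, ⟨u', hu', hup'⟩, ⟨v', hv', hvp'⟩⟩ huv
    obtain ⟨rfl, rfl⟩ := Prod.mk.inj (h ⟨hu, hv⟩ ⟨hu', hv'⟩ (congrArg Subtype.val huv))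
    obtain rfl : p = p' := Prod.ext (hup.symm.trans hup') (hvp.symm.trans hvp')
    rfl
  · rintro ⟨_, ⟨u, hu, v, hv, rfl⟩, hn⟩
    exact ⟨⟨⟨(u.length, v.length), by simpa using hn⟩, ⟨u, hu, rfl⟩, ⟨v, hv, rfl⟩⟩, rfl⟩

theorem lengthGenFun_image2_append [Finite α] {L M : Set (List α)}
    (h : Set.InjOn (fun p => p.1 ++ p.2) (L ×ˢ M)) :
    lengthGenFun R (Set.image2 (· ++ ·) L M) = lengthGenFun R L * lengthGenFun R M := by
  ext n
  simp [coeff_mul, lengthCount_image2_append h]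

lemma lengthCount_singleton (w : List α) (n : ℕ) :
    lengthCount {w} n = if n = w.length then 1 else 0 := by
  unfold lengthCount
  split_ifs with hn
  · subst hn
    refine Nat.card_eq_one_iff_unique.2 ⟨⟨?_⟩, ⟨⟨w, rfl, rfl⟩⟩⟩
    rintro ⟨u, rfl, -⟩ ⟨v, rfl, -⟩
    rfl
  · refine Nat.card_eq_zero.2 (Or.inl ⟨?_⟩)
    rintro ⟨u, rfl, hu⟩
    exact hn hu.symm

theorem lengthGenFun_singleton (w : List α) : lengthGenFun R {w} = X ^ w.length := by
  ext n
  rw [coeff_lengthGenFun, lengthCount_singleton, coeff_X_pow]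
  split_ifs <;> simp

end LengthGenFun

inductive Syllable
  | u1
  | u2
  | s

namespace Syllable

def value : Syllable → ModularGroup'
  | u1 => letterΓ true
  | u2 => letterΓ true ^ 2
  | s => letterΓ false

def isS : Syllable → Bool
  | s => true
  | _ => false

end Syllable

open Syllable

/-- A stack `x₁ :: x₂ :: … :: xₖ` encodes the reduced word `xₖ ⋯ x₂ x₁` of `ℤ/3 ∗ ℤ/2`, read from
its last syllable; `step b` multiplies it on the right by `U` (`b = true`) or `S` (`b = false`). -/
def step : Bool → List Syllable → List Syllable
  | true, [] => [u1]
  | true, u1 :: l => u2 :: l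
  | true, u2 :: l => l
  | true, s :: l => u1 :: s :: l
  | false, [] => [s]
  | false, s :: l => l
  | false, x :: l => s :: x :: l

def run (w : List Bool) (l : List Syllable) : List Syllable :=
  w.foldl (fun l b => step b l) l

@[simp]
lemma run_nil (l : List Syllable) : run [] l = l := rfl

@[simp]
lemma run_cons (b : Bool) (w : List Bool) (l : List Syllable) :
    run (b :: w) l = run w (step b l) := rfl

lemma run_append (v w : List Bool) (l : List Syllable) : run (v ++ w) l = run w (run v l) :=
  List.foldl_append

def stackValue : List Syllable → ModularGroup'
  | [] => 1
  | x :: l => stackValue l * x.value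

lemma letterΓ_true_pow_three : letterΓ true ^ 3 = 1 :=
  PresentedGroup.one_of_mem (by simp [modularRels])

lemma letterΓ_false_pow_two : letterΓ false ^ 2 = 1 :=
  PresentedGroup.one_of_mem (by simp [modularRels])

lemma stackValue_step (b : Bool) (l : List Syllable) :
    stackValue (step b l) = stackValue l * letterΓ b := by
  rcases b with _ | _ <;> rcases l with _ | ⟨_ | _ | _, l⟩ <;>
    simp [step, stackValue, Syllable.value, mul_assoc, ← pow_succ, letterΓ_true_pow_three,
      ← pow_two, letterΓ_false_pow_two]

lemma stackValue_run (w : List Bool) (l : List Syllable) :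
    stackValue (run w l) = stackValue l * wordProd w := by
  induction w generalizing l with
  | nil => simp [wordProd]
  | cons b w ih => simp [ih, stackValue_step, wordProd, mul_assoc]

def IsAlternating (l : List Syllable) : Prop :=
  l.IsChain fun x y => x.isS ≠ y.isS

lemma IsAlternating.step {l : List Syllable} (hl : IsAlternating l) (b : Bool) :
    IsAlternating (step b l) := by
  rcases b with _ | _ <;> rcases l with _ | ⟨_ | _ | _, _ | ⟨_ | _ | _, l⟩⟩ <;>
    simp_all [IsAlternating, _root_.step, isS, List.isChain_cons_cons]

lemma step_step_step_true {l : List Syllable} (hl : IsAlternating l) :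
    step true (step true (step true l)) = l := by
  rcases l with _ | ⟨_ | _ | _, _ | ⟨_ | _ | _, l⟩⟩ <;>
    simp_all [IsAlternating, step, isS, List.isChain_cons_cons]

lemma step_step_false {l : List Syllable} (hl : IsAlternating l) :
    step false (step false l) = l := by
  rcases l with _ | ⟨_ | _ | _, _ | ⟨_ | _ | _, l⟩⟩ <;>
    simp_all [IsAlternating, step, isS, List.isChain_cons_cons]

abbrev AlternatingStack : Type := {l : List Syllable // IsAlternating l}

def permU : Equiv.Perm AlternatingStack where
  toFun l := ⟨step true l.1, l.2.step true⟩
  invFun l := ⟨step true (step true l.1), (l.2.step true).step true⟩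
  left_inv l := Subtype.ext (step_step_step_true l.2)
  right_inv l := Subtype.ext (step_step_step_true l.2)

def permS : Equiv.Perm AlternatingStack :=
  Function.Involutive.toPerm (fun l => ⟨step false l.1, l.2.step false⟩)
    fun l => Subtype.ext (step_step_false l.2)

lemma permU_pow_three : permU ^ 3 = 1 :=
  Equiv.ext fun l => Subtype.ext (step_step_step_true l.2)

lemma permS_pow_two : permS ^ 2 = 1 :=
  Equiv.ext fun l => Subtype.ext (step_step_false l.2)

/-- `Γ` acts on alternating stacks on the right, hence the opposite group. -/
def stackAction : ModularGroup' →* (Equiv.Perm AlternatingStack)ᵐᵒᵖ :=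
  PresentedGroup.toGroup (f := fun b => .op (if b then permU else permS)) <| by
    rintro _ (rfl | rfl) <;> simp [← MulOpposite.op_pow, permU_pow_three, permS_pow_two]

lemma stackAction_wordProd (w : List Bool) (l : AlternatingStack) :
    ((stackAction (wordProd w)).unop l).1 = run w l.1 := by
  induction w generalizing l with
  | nil => simp [wordProd]
  | cons b w ih =>
    have hb : (stackAction (letterΓ b)).unop l = ⟨step b l.1, l.2.step b⟩ := by
      cases b <;> rfl
    have hw : wordProd (b :: w) = letterΓ b * wordProd w := List.prod_cons
    rw [hw, map_mul, MulOpposite.unop_mul, Equiv.Perm.mul_apply, hb, ih]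
    rfl

theorem wordProd_eq_one_iff (w : List Bool) : wordProd w = 1 ↔ run w [] = [] := by
  constructor
  · intro hw
    have h := stackAction_wordProd w ⟨[], List.isChain_nil⟩
    rw [hw, map_one] at h
    exact h.symm
  · intro hw
    simpa [hw, stackValue] using (stackValue_run w []).symm

def emptying (l : List Syllable) : Set (List Bool) :=
  {w | run w l = []}

def firstEmptying (l : List Syllable) : Set (List Bool) :=
  {w | run w l = [] ∧ ∀ p, p <+: w → run p l = [] → p = w}

lemma step_cons_append (b : Bool) (x : Syllable) (l m : List Syllable) :
    step b (x :: l ++ m) = step b (x :: l) ++ m := by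
  cases b <;> cases x <;> rfl

lemma run_append_of_ne_nil {w : List Bool} {l : List Syllable} (m : List Syllable)
    (h : ∀ p, p <+: w → p ≠ w → run p l ≠ []) : run w (l ++ m) = run w l ++ m := by
  induction w generalizing l with
  | nil => rfl
  | cons b w ih =>
    obtain ⟨x, l, rfl⟩ :=
      List.exists_cons_of_ne_nil (h [] List.nil_prefix (List.cons_ne_nil _ _).symm)
    rw [run_cons, run_cons, step_cons_append]
    exact ih fun p hp hne => h (b :: p) (List.cons_prefix_cons.2 ⟨rfl, hp⟩) (by simpa using hne)

lemma run_append_of_prefix_firstEmptying {v p : List Bool} {l : List Syllable}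
    (hv : v ∈ firstEmptying l) (hp : p <+: v) (m : List Syllable) :
    run p (l ++ m) = run p l ++ m :=
  run_append_of_ne_nil m fun q hq hne hq_nil => by
    obtain rfl := hv.2 q (hq.trans hp) hq_nil
    exact hne (hq.eq_of_length (le_antisymm hq.length_le hp.length_le))

lemma run_append_of_mem_firstEmptying {v : List Bool} {l : List Syllable}
    (hv : v ∈ firstEmptying l) (m : List Syllable) : run v (l ++ m) = m := by
  rw [run_append_of_prefix_firstEmptying hv (List.prefix_refl v), hv.1, List.nil_append]

lemma firstEmptying_nil : firstEmptying [] = {[]} := by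
  ext w
  refine ⟨fun hw => (hw.2 [] List.nil_prefix rfl).symm, ?_⟩
  rintro rfl
  exact ⟨rfl, fun p hp _ => List.prefix_nil.1 hp⟩

lemma cons_mem_firstEmptying_iff {l : List Syllable} (hl : l ≠ []) (b : Bool) (w : List Bool) :
    b :: w ∈ firstEmptying l ↔ w ∈ firstEmptying (step b l) := by
  simp only [firstEmptying, Set.mem_ofPred_eq, run_cons]
  refine and_congr_right fun _ => ⟨fun h p hp hp_nil => ?_, fun h p hp hp_nil => ?_⟩
  · exact List.cons_injective (h (b :: p) (List.cons_prefix_cons.2 ⟨rfl, hp⟩) hp_nil)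
  · rcases List.prefix_cons_iff.1 hp with rfl | ⟨q, rfl, hq⟩
    · exact absurd hp_nil hl
    · rw [h q hq hp_nil]

lemma emptying_append (l m : List Syllable) :
    emptying (l ++ m) = Set.image2 (· ++ ·) (firstEmptying l) (emptying m) := by
  ext w
  constructor
  · intro hw
    induction w generalizing l with
    | nil =>
      obtain ⟨rfl, rfl⟩ := List.append_eq_nil_iff.1 hw
      exact ⟨[], by simp [firstEmptying_nil], [], rfl, rfl⟩
    | cons b w ih =>
      rcases l with _ | ⟨x, l⟩
      · exact ⟨[], by simp [firstEmptying_nil], b :: w, hw, rfl⟩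
      · have hw' : run w (step b (x :: l) ++ m) = [] := by rwa [← step_cons_append]
        obtain ⟨v₁, hv₁, v₂, hv₂, rfl⟩ := ih _ hw'
        exact ⟨b :: v₁, (cons_mem_firstEmptying_iff (List.cons_ne_nil _ _) b v₁).2 hv₁,
          v₂, hv₂, rfl⟩
  · rintro ⟨v₁, hv₁, v₂, hv₂, rfl⟩
    show run (v₁ ++ v₂) (l ++ m) = []
    rwa [run_append, run_append_of_mem_firstEmptying hv₁]

lemma firstEmptying_append (l m : List Syllable) :
    firstEmptying (l ++ m) = Set.image2 (· ++ ·) (firstEmptying l) (firstEmptying m) := by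
  ext w
  constructor
  · intro hw
    have hw₁ : w ∈ emptying (l ++ m) := hw.1
    rw [emptying_append] at hw₁
    obtain ⟨v₁, hv₁, v₂, hv₂, rfl⟩ := hw₁
    refine ⟨v₁, hv₁, v₂, ⟨hv₂, fun q hq hq_nil => ?_⟩, rfl⟩
    refine List.append_cancel_left (hw.2 (v₁ ++ q) ((List.prefix_append_right_inj v₁).2 hq) ?_)
    rwa [run_append, run_append_of_mem_firstEmptying hv₁]
  · rintro ⟨v₁, hv₁, v₂, hv₂, rfl⟩
    have hw : v₁ ++ v₂ ∈ emptying (l ++ m) := by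
      rw [emptying_append]
      exact Set.mem_image2_of_mem hv₁ hv₂.1
    refine ⟨hw, fun p hp hp_nil => ?_⟩
    rcases List.prefix_or_prefix_of_prefix hp (List.prefix_append v₁ v₂) with hpv | ⟨q, rfl⟩
    · rw [run_append_of_prefix_firstEmptying hv₁ hpv, List.append_eq_nil_iff] at hp_nil
      obtain rfl := hv₁.2 p hpv hp_nil.1
      obtain rfl : v₂ = [] := by simpa [hp_nil.2, firstEmptying_nil] using hv₂
      simp
    · rw [run_append, run_append_of_mem_firstEmptying hv₁] at hp_nil
      rw [hv₂.2 q ((List.prefix_append_right_inj v₁).1 hp) hp_nil]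

lemma injOn_append_firstEmptying (l : List Syllable) (S : Set (List Bool)) :
    Set.InjOn (fun p => p.1 ++ p.2) (firstEmptying l ×ˢ S) := by
  rintro ⟨v₁, v₂⟩ ⟨hv₁, -⟩ ⟨w₁, w₂⟩ ⟨hw₁, -⟩ (h : v₁ ++ v₂ = w₁ ++ w₂)
  obtain rfl : v₁ = w₁ := by
    rcases List.prefix_or_prefix_of_prefix (h ▸ List.prefix_append v₁ v₂)
      (List.prefix_append w₁ w₂) with h' | h'
    · exact hw₁.2 v₁ h' hv₁.1
    · exact (hv₁.2 w₁ h' hw₁.1).symm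
  rw [List.append_cancel_left h]

section GenFun

variable (R : Type*) [CommSemiring R]

lemma lengthGenFun_firstEmptying_nil : lengthGenFun R (firstEmptying []) = 1 := by
  rw [firstEmptying_nil, lengthGenFun_singleton, List.length_nil, pow_zero]

lemma lengthGenFun_firstEmptying_cons_cons (x y : Syllable) (l : List Syllable) :
    lengthGenFun R (firstEmptying (x :: y :: l)) =
      lengthGenFun R (firstEmptying [x]) * lengthGenFun R (firstEmptying (y :: l)) := by
  rw [← lengthGenFun_image2_append R (injOn_append_firstEmptying _ _), ← firstEmptying_append]
  rfl

lemma lengthGenFun_emptying_cons (x : Syllable) (l : List Syllable) :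
    lengthGenFun R (emptying (x :: l)) =
      lengthGenFun R (firstEmptying [x]) * lengthGenFun R (emptying l) := by
  rw [← lengthGenFun_image2_append R (injOn_append_firstEmptying _ _), ← emptying_append]
  rfl

lemma lengthGenFun_firstEmptying_of_ne_nil {l : List Syllable} (hl : l ≠ []) :
    lengthGenFun R (firstEmptying l) = X * ∑ b, lengthGenFun R (firstEmptying (step b l)) := by
  rw [lengthGenFun_eq_add_X_mul_sum, if_neg fun h => hl h.1, zero_add]
  simp only [cons_mem_firstEmptying_iff hl]
  rfl

lemma lengthGenFun_emptying_nil :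
    lengthGenFun R (emptying []) = 1 + X * ∑ b, lengthGenFun R (emptying (step b [])) := by
  rw [lengthGenFun_eq_add_X_mul_sum, if_pos (show [] ∈ emptying [] from rfl)]
  rfl

end GenFun

lemma Tser_eq_lengthGenFun_emptying : Tser = lengthGenFun ℚ (emptying []) := by
  ext n
  rw [Tser, coeff_mk, coeff_lengthGenFun, t, lengthCount_eq_card_fin]
  exact congrArg _ (Nat.card_congr (Equiv.subtypeEquivRight fun w => wordProd_eq_one_iff _))

section Elimination

variable {R : Type*} [CommRing R]

/-- The coefficients are the Bézout cofactors, divided by `x ^ 3`, of the resultant in `y` of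
`hy` and `hT`, which is `x ^ 6` times the cubic. -/
lemma cubic_of_resultant {x T y : R}
    (hy : y ^ 3 - (1 - x ^ 2) * y ^ 2 - x ^ 3 * y + x ^ 3 = 0) (hT : T * (y ^ 3 - x ^ 3) = y ^ 2) :
    x ^ 3 * ((6 * x ^ 5 - 3 * x ^ 4 + 2 * x ^ 3 + 3 * x ^ 2 - 1) * T ^ 3 +
      (x ^ 5 - x ^ 4 + x ^ 3 + 2 * x ^ 2 - 1) * T ^ 2 + (x ^ 3 - x ^ 2 + 1) * T + 1) = 0 := by
  linear_combination
    ((1 - T^2 + 2*x^2*T^2 - x^3*T^2 - x^4*T^2 + 3*x^3*T^3 + x^5*T^3)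
      + (1 + x^2*T - 2*T^2 + 2*x^2*T^2 - x^3*T^2 + T^3 - 2*x^2*T^3 + 2*x^3*T^3 + x^4*T^3) * y
      + (-T - T^2 - x^2*T^2 + 2*T^3 - 2*x^2*T^3 + x^3*T^3) * y^2) * hy
    + ((-1 + x^2 - x^3 - 2*x^3*T - x^5*T + T^2 - 3*x^2*T^2 + x^3*T^2 + 3*x^4*T^2 - 5*x^5*T^2)
      + (x^2 - T + x^4*T + T^2 - 2*x^2*T^2 - x^3*T^2 + x^4*T^2 - x^5*T^2) * y
      + (1 + T + x^2*T - 2*T^2 + 2*x^2*T^2 - x^3*T^2) * y^2) * hT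

lemma cubic_of_firstEmptying_equations {x a b c T : R}
    (hs : b = x * (a * b + 1)) (hu1 : a = x * (c + b * a)) (hu2 : c = x * (1 + b * c))
    (hT : T = 1 + x * (a * T + b * T)) :
    x ^ 3 * ((6 * x ^ 5 - 3 * x ^ 4 + 2 * x ^ 3 + 3 * x ^ 2 - 1) * T ^ 3 +
      (x ^ 5 - x ^ 4 + x ^ 3 + 2 * x ^ 2 - 1) * T ^ 2 + (x ^ 3 - x ^ 2 + 1) * T + 1) = 0 := by
  have hc : c * (1 - x * b) = x := by linear_combination hu2
  have ha : a * (1 - x * b) ^ 2 = x ^ 2 := by linear_combination (1 - x * b) * hu1 + x * hc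
  refine cubic_of_resultant (y := 1 - x * b) ?_ ?_
  · linear_combination (-x * (1 - x * b) ^ 2) * hs - x ^ 2 * b * ha
  · linear_combination (1 - x * b) ^ 2 * hT + x * T * ha

end Elimination

open PowerSeries in
theorem stmt8 :
    (6 * (X : PowerSeries ℚ) ^ 5 - 3 * X ^ 4 + 2 * X ^ 3 + 3 * X ^ 2 - 1) * Tser ^ 3 +
      (X ^ 5 - X ^ 4 + X ^ 3 + 2 * X ^ 2 - 1) * Tser ^ 2 +
      (X ^ 3 - X ^ 2 + 1) * Tser + 1 = 0 := by
  have hs := lengthGenFun_firstEmptying_of_ne_nil ℚ (l := [s]) (List.cons_ne_nil _ _)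
  have hu1 := lengthGenFun_firstEmptying_of_ne_nil ℚ (l := [u1]) (List.cons_ne_nil _ _)
  have hu2 := lengthGenFun_firstEmptying_of_ne_nil ℚ (l := [u2]) (List.cons_ne_nil _ _)
  have hT := lengthGenFun_emptying_nil ℚ
  simp only [Fintype.sum_bool, step, lengthGenFun_firstEmptying_cons_cons,
    lengthGenFun_firstEmptying_nil, lengthGenFun_emptying_cons] at hs hu1 hu2 hT
  rw [Tser_eq_lengthGenFun_emptying]
  exact (mul_eq_zero.1 (cubic_of_firstEmptying_equations hs hu1 hu2 hT)).resolve_left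
    (pow_ne_zero 3 X_ne_zero)
end

section
/- The formal power series K(x,y), defined as the component f₃ of the unique power series solution of the system f₁ = x·f₂ + y·f₃·f₁, f₂ = x + y·f₃·f₂, f₃ = x·f₁·f₃ + y, satisfies the cubic equation y²K³ − (2y + y³)K² + (1 + 2y² − x³)K − y = 0. -/
open MvPowerSeries

theorem stmt17
    (f₁ f₂ f₃ : MvPowerSeries (Fin 2) ℚ)
    (h₁0 : constantCoeff f₁ = 0)
    (h₂0 : constantCoeff f₂ = 0)
    (h₃0 : constantCoeff f₃ = 0)
    (h₁ : f₁ = X 0 * f₂ + X 1 * f₃ * f₁)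
    (h₂ : f₂ = X 0 + X 1 * f₃ * f₂)
    (h₃ : f₃ = X 0 * f₁ * f₃ + X 1) :
    (X 1) ^ 2 * f₃ ^ 3 - (2 * X 1 + (X 1) ^ 3) * f₃ ^ 2 +
      (1 + 2 * (X 1) ^ 2 - (X 0) ^ 3) * f₃ - X 1 = 0 := by
  linear_combination (1 - X 1 * f₃)^2 * h₃ + X 0 * f₃ * (1 - X 1 * f₃) * h₁ + (X 0)^2 * f₃ * h₂
end
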